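/- Let E be a real Hilbert space, f : E → ℝ a differentiable function with gradient ∇f, and q ∈ E a strict local minimum of f, i.e. there is a neighborhood U of q such that f(x) > f(q) for every x ∈ U with x ≠ q. Let a ∈ ℝ and let χ : [a,∞) → E be differentiable with χ′(τ) = ∇f(χ(τ)) for all τ ≥ a, and suppose χ(τ) → q as τ → ∞. Then there exists T ≥ a such that χ(τ) = q for all τ ≥ T; in particular any such gradient trajectory converging to q is eventually constant equal to q. -/

import Mathlib

/-! By the chain rule, `f ∘ χ` has derivative `‖∇f(χ τ)‖² ≥ 0`, so it is nondecreasing and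
hence bounded above by its limit `f q`. Once `χ` has entered the neighbourhood `U` on which `q`
is the strict minimum, `f (χ τ) ≤ f q` leaves no room for `χ τ ≠ q`. -/

open Filter Set

section GradientFlow

variable {E : Type*} [NormedAddCommGroup E] [InnerProductSpace ℝ E] [CompleteSpace E]
  {f : E → ℝ} {χ : ℝ → E}

theorem HasDerivWithinAt.comp_of_eq_gradient {s : Set ℝ} {τ : ℝ}
    (hf : DifferentiableAt ℝ f (χ τ)) (hχ : HasDerivWithinAt χ (gradient f (χ τ)) s τ) :
    HasDerivWithinAt (f ∘ χ) (‖gradient f (χ τ)‖ ^ 2) s τ := by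
  simpa only [InnerProductSpace.toDual_apply_apply, real_inner_self_eq_norm_sq] using
    hf.hasGradientAt.hasFDerivAt.comp_hasDerivWithinAt τ hχ

theorem monotoneOn_comp_of_eq_gradient {D : Set ℝ} (hD : Convex ℝ D)
    (hf : ∀ τ ∈ D, DifferentiableAt ℝ f (χ τ))
    (hχ : ∀ τ ∈ D, HasDerivWithinAt χ (gradient f (χ τ)) D τ) :
    MonotoneOn (f ∘ χ) D := by
  have hderiv : ∀ τ ∈ D, HasDerivWithinAt (f ∘ χ) (‖gradient f (χ τ)‖ ^ 2) D τ :=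
    fun τ hτ => (hχ τ hτ).comp_of_eq_gradient (hf τ hτ)
  refine monotoneOn_of_hasDerivWithinAt_nonneg hD (fun τ hτ => (hderiv τ hτ).continuousWithinAt)
    (fun τ hτ => (hderiv τ (interior_subset hτ)).mono interior_subset) fun τ _ => ?_
  positivity

end GradientFlow

theorem MonotoneOn.le_of_tendsto_Ici {α β : Type*} [TopologicalSpace α] [Preorder α]
    [OrderClosedTopology α] [SemilatticeSup β] [Nonempty β] {g : β → α} {a : β} {L : α}
    (hg : MonotoneOn g (Ici a)) (hL : Tendsto g atTop (nhds L)) {b : β} (hb : a ≤ b) :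
    g b ≤ L :=
  ge_of_tendsto hL <| by
    filter_upwards [eventually_ge_atTop b] with c hc
    exact hg hb (hb.trans hc) hc

theorem eventually_eq_of_tendsto_of_le_strictMin {ι E : Type*} [TopologicalSpace E] {f : E → ℝ}
    {q : E} (hq : ∃ U ∈ nhds q, ∀ x ∈ U, x ≠ q → f q < f x) {l : Filter ι} {χ : ι → E}
    (hχ : Tendsto χ l (nhds q)) (hle : ∀ᶠ t in l, f (χ t) ≤ f q) :
    ∀ᶠ t in l, χ t = q := by
  obtain ⟨U, hU, hUq⟩ := hq
  filter_upwards [hχ hU, hle] with t htU htle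
  by_contra hne
  exact (hUq _ htU hne).not_ge htle

/-- A gradient trajectory converging to a strict local minimum `q` of `f`
is eventually constant equal to `q`. -/
theorem gradient_trajectory_eventually_const {E : Type*} [NormedAddCommGroup E]
    [InnerProductSpace ℝ E] [CompleteSpace E]
    (f : E → ℝ) (hf : Differentiable ℝ f) (q : E)
    (hq : ∃ U ∈ nhds q, ∀ x ∈ U, x ≠ q → f q < f x)
    (a : ℝ) (χ : ℝ → E)
    (hχ : ∀ τ ∈ Set.Ici a, HasDerivWithinAt χ (gradient f (χ τ)) (Set.Ici a) τ)
    (hlim : Filter.Tendsto χ Filter.atTop (nhds q)) :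
    ∃ T : ℝ, a ≤ T ∧ ∀ τ : ℝ, T ≤ τ → χ τ = q := by
  have hmono : MonotoneOn (f ∘ χ) (Ici a) :=
    monotoneOn_comp_of_eq_gradient (convex_Ici a) (fun τ _ => hf (χ τ)) hχ
  have hle : ∀ᶠ τ in atTop, f (χ τ) ≤ f q := by
    filter_upwards [eventually_ge_atTop a] with τ hτ
    exact hmono.le_of_tendsto_Ici ((hf.continuous.tendsto q).comp hlim) hτ
  obtain ⟨T, hT⟩ := eventually_atTop.1
    ((eventually_eq_of_tendsto_of_le_strictMin hq hlim hle).and (eventually_ge_atTop a))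
  exact ⟨T, (hT T le_rfl).2, fun τ hτ => (hT τ hτ).1⟩
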